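/- Let G be a countable discrete group with a sofic approximation Σ = (σ_n), let Φ = φ^G : (X^G, μ, S, d_X) → (Y^G, ν, S, d_Y) be a factor map of metric G-processes, and let λ = ∫ δ_{(x, Φ(x))} μ(dx) be its graphical joining. Suppose x_n ∈ X^{V_n} and y_n, w_n ∈ Y^{V_n} are sequences such that both P^{σ_n}_{(x_n, y_n)} and P^{σ_n}_{(x_n, w_n)} weak*-converge to λ. Then d_Y^{(V_n)}(y_n, w_n) → 0. -/

import Mathlib

/-!
Embed `Y` isometrically into `ℓ^∞` by the Kuratowski embedding `ι` and approximate `ι ∘ φ` in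
`L¹(μ)` by a bounded continuous `g`. Then `F (a, y) = ‖ι y - g a‖` is a bounded continuous
function on `X^G × Y` with `d(y, w) ≤ F (a, y) + F (a, w)` whose integral against the graph
measure of `φ` is small. Read through `(x, y) ↦ (x, y_e)`, weak* convergence to the graphical
joining makes the empirical averages of `F` along `(x_n, y_n)` and along `(x_n, w_n)` eventually
small, and together they dominate `d^{(V_n)}(y_n, w_n)`.
-/

open MeasureTheory Filter Topology
open scoped ENNReal NNReal

section Defs

variable {G : Type*} [Group G]

/-- The right-shift action of `G` on `G → X`. -/
def shift {X : Type*} (g : G) (x : G → X) : G → X := fun h => x (h * g)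

/-- The process map `φ^G` associated to `φ : X^G → Y`. -/
def procMap {X Y : Type*} (φ : (G → X) → Y) (x : G → X) : G → Y := fun g => φ (shift g x)

/-- Shift-invariance of a measure on `X^G`. -/
def ShiftInvariant {X : Type*} [MeasurableSpace X] (μ : Measure (G → X)) : Prop :=
  ∀ g : G, μ.map (shift g) = μ

/-- The pullback name of `x : V → X` at `v ∈ V`. -/
def pullbackName {V X : Type*} (σ : G → Equiv.Perm V) (v : V) (x : V → X) : G → X :=
  fun g => x (σ g v)

lemma measurable_shift {X : Type*} [MeasurableSpace X] (g : G) :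
    Measurable (shift (X := X) g) :=
  measurable_pi_lambda _ fun h => measurable_pi_apply (h * g)

/-- The empirical distribution of a model `x : V → X` along `σ : G → Sym(V)`. -/
noncomputable def empDist {V X : Type*} [Fintype V] [Nonempty V] [MeasurableSpace X]
    (σ : G → Equiv.Perm V) (x : V → X) : ProbabilityMeasure (G → X) :=
  ⟨(Fintype.card V : ℝ≥0∞)⁻¹ • ∑ v : V, Measure.dirac (pullbackName σ v x), by
    constructor
    simp only [Measure.smul_apply, Measure.coe_finset_sum, Finset.sum_apply,
      Measure.dirac_apply_of_mem (Set.mem_univ _), Finset.sum_const, Finset.card_univ,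
      nsmul_eq_mul, mul_one, smul_eq_mul]
    exact ENNReal.inv_mul_cancel (by exact_mod_cast Fintype.card_ne_zero)
      (by simp)⟩

/-- A sofic approximation to `G`. -/
def IsSoficApprox (V : ℕ → Type*) (σ : ∀ n, G → Equiv.Perm (V n)) : Prop :=
  (∀ g h : G, Tendsto
      (fun n => (Nat.card {v : V n // σ n g (σ n h v) = σ n (g * h) v} : ℝ) / (Nat.card (V n) : ℝ))
      atTop (𝓝 1)) ∧
  ∀ g : G, g ≠ 1 → Tendsto
      (fun n => (Nat.card {v : V n // σ n g v ≠ v} : ℝ) / (Nat.card (V n) : ℝ))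
      atTop (𝓝 1)

/-- Normalized Hamming average of `dX` over `V`. -/
noncomputable def hamming {V X : Type*} [Fintype V] (dX : X → X → ℝ) (x y : V → X) : ℝ :=
  (∑ v : V, dX (x v) (y v)) / (Fintype.card V : ℝ)

/-- The property of having connected model spaces relative to the sofic approximation `σ`. -/
def ConnectedModelSpaces [Countable G] (V : ℕ → Type*) [∀ n, Fintype (V n)] [∀ n, Nonempty (V n)]
    (σ : ∀ n, G → Equiv.Perm (V n))
    (X : Type*) [TopologicalSpace X] [MeasurableSpace X] [OpensMeasurableSpace X]
    [SecondCountableTopology X]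
    (dX : X → X → ℝ) (μ : ProbabilityMeasure (G → X)) : Prop :=
  ∀ n : ℕ → ℕ, StrictMono n → ∀ x y : (i : ℕ) → V (n i) → X,
    Tendsto (fun i => empDist (σ (n i)) (x i)) atTop (𝓝 μ) →
    Tendsto (fun i => empDist (σ (n i)) (y i)) atTop (𝓝 μ) →
    ∃ (δ : ℕ → ℝ) (ℓ : ℕ → ℕ) (p : (i : ℕ) → ℕ → V (n i) → X),
      Antitone δ ∧ (∀ i, 0 < δ i) ∧ Tendsto δ atTop (𝓝 0) ∧
      (∀ i, p i 0 = x i) ∧ (∀ i, p i (ℓ i) = y i) ∧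
      (∀ i j, j < ℓ i → hamming dX (p i j) (p i (j + 1)) < δ i) ∧
      ∀ O ∈ 𝓝 μ, ∀ᶠ i in atTop, ∀ j ≤ ℓ i, empDist (σ (n i)) (p i j) ∈ O

/-- The graph map `x ↦ (x, Φ(x))`, viewed as a map into `(X × Y)^G`. -/
def graphMap {X Y : Type*} (φ : (G → X) → Y) (x : G → X) : G → X × Y :=
  fun g => (x g, φ (shift g x))

lemma measurable_graphMap {X Y : Type*} [MeasurableSpace X] [MeasurableSpace Y]
    {φ : (G → X) → Y} (hφ : Measurable φ) : Measurable (graphMap (G := G) φ) :=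
  measurable_pi_lambda _ fun g => (measurable_pi_apply g).prodMk (hφ.comp (measurable_shift g))

lemma measurable_procMap {X Y : Type*} [MeasurableSpace X] [MeasurableSpace Y]
    {φ : (G → X) → Y} (hφ : Measurable φ) : Measurable (procMap (G := G) φ) :=
  measurable_pi_lambda _ fun g => hφ.comp (measurable_shift g)

/-- The graphical joining of `μ` and its pushforward under the factor map generated by `φ`. -/
noncomputable def graphJoin {X Y : Type*} [MeasurableSpace X] [MeasurableSpace Y]
    {φ : (G → X) → Y} (hφ : Measurable φ) (μ : ProbabilityMeasure (G → X)) :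
    ProbabilityMeasure (G → X × Y) :=
  μ.map (f := graphMap φ) (measurable_graphMap hφ).aemeasurable

/-- Model-surjectivity of the factor map generated by `φ`, relative to `σ`. -/
def ModelSurjective [Countable G] (V : ℕ → Type*) [∀ n, Fintype (V n)] [∀ n, Nonempty (V n)]
    (σ : ∀ n, G → Equiv.Perm (V n))
    {X Y : Type*} [TopologicalSpace X] [MeasurableSpace X] [OpensMeasurableSpace X]
    [SecondCountableTopology X]
    [TopologicalSpace Y] [MeasurableSpace Y] [OpensMeasurableSpace Y] [SecondCountableTopology Y]
    (φ : (G → X) → Y) (hφ : Measurable φ)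
    (μ : ProbabilityMeasure (G → X)) (ν : ProbabilityMeasure (G → Y)) : Prop :=
  ∀ n : ℕ → ℕ, StrictMono n → ∀ y : (i : ℕ) → V (n i) → Y,
    Tendsto (fun i => empDist (σ (n i)) (y i)) atTop (𝓝 ν) →
    ∃ x : (i : ℕ) → V (n i) → X,
      Tendsto (fun i => empDist (σ (n i)) (fun v => (x i v, y i v))) atTop (𝓝 (graphJoin hφ μ))

end Defs

open scoped BoundedContinuousFunction

section GraphConcentration

variable {A Y : Type*} [TopologicalSpace A] [TopologicalSpace.PseudoMetrizableSpace A]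
  [MeasurableSpace A] [BorelSpace A] [MetricSpace Y] [CompactSpace Y] [MeasurableSpace Y]
  [BorelSpace Y]

theorem exists_boundedContinuous_dist_le_add_integral_graph_le (P : Measure A)
    [IsFiniteMeasure P] {φ : A → Y} (hφ : Measurable φ) {η : ℝ} (hη : 0 < η) :
    ∃ F : A × Y →ᵇ ℝ, (∀ a y w, dist y w ≤ F (a, y) + F (a, w)) ∧
      ∫ a, F (a, φ a) ∂P ≤ η := by
  have hι := kuratowskiEmbedding.isometry Y
  let ι : Y →ᵇ lp (fun _ : ℕ => ℝ) ∞ := .mkOfCompact ⟨kuratowskiEmbedding Y, hι.continuous⟩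
  have hιφ : Integrable (ι ∘ φ) P :=
    .of_bound (ι.continuous.comp_stronglyMeasurable hφ.stronglyMeasurable).aestronglyMeasurable
      ‖ι‖ (.of_forall fun a => ι.norm_coe_le_norm (φ a))
  obtain ⟨g, hg, -⟩ := hιφ.exists_boundedContinuous_integral_sub_le hη
  let H : A × Y →ᵇ lp (fun _ : ℕ => ℝ) ∞ :=
    ι.compContinuous ⟨Prod.snd, continuous_snd⟩ - g.compContinuous ⟨Prod.fst, continuous_fst⟩
  refine ⟨H.comp norm lipschitzWith_one_norm, fun a y w => ?_, by simpa [H, norm_sub_rev] using hg⟩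
  simp only [H, BoundedContinuousFunction.comp_apply, BoundedContinuousFunction.coe_sub,
    BoundedContinuousFunction.coe_compContinuous, Pi.sub_apply, Function.comp_apply,
    ContinuousMap.coe_mk, ← dist_eq_norm]
  exact (hι.dist_eq y w).symm.trans_le (dist_triangle_right (ι y) (ι w) (g a))

theorem tendsto_integral_dist_zero_of_tendsto_map_graph {ι Ω : Type*} {l : Filter ι}
    [MeasurableSpace Ω] (P : ProbabilityMeasure A) {φ : A → Y} (hφ : Measurable φ)
    (π : ι → ProbabilityMeasure Ω) {a : Ω → A} {b c : Ω → Y} (ha : Measurable a)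
    (hb : Measurable b) (hc : Measurable c)
    (hab : Tendsto (fun i => (π i).map (ha.prodMk hb).aemeasurable) l
      (𝓝 (P.map (measurable_id.prodMk hφ).aemeasurable)))
    (hac : Tendsto (fun i => (π i).map (ha.prodMk hc).aemeasurable) l
      (𝓝 (P.map (measurable_id.prodMk hφ).aemeasurable))) :
    Tendsto (fun i => ∫ ω, dist (b ω) (c ω) ∂(π i)) l (𝓝 0) := by
  refine Metric.tendsto_nhds.mpr fun ε hε => ?_
  obtain ⟨F, hF_dist, hF_graph⟩ :=
    exists_boundedContinuous_dist_le_add_integral_graph_le (P : Measure A) hφ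
      (by positivity : 0 < ε / 4)
  have hF_lim : ∫ p, F p ∂(P.map (measurable_id.prodMk hφ).aemeasurable : Measure (A × Y))
      < ε / 2 := by
    rw [ProbabilityMeasure.toMeasure_map,
      integral_map (measurable_id.prodMk hφ).aemeasurable F.continuous.aestronglyMeasurable]
    exact hF_graph.trans_lt (by linarith)
  have hF_eventually : ∀ {d : Ω → Y} (hd : Measurable d),
      Tendsto (fun i => (π i).map (ha.prodMk hd).aemeasurable) l
        (𝓝 (P.map (measurable_id.prodMk hφ).aemeasurable)) →
      ∀ᶠ i in l,
        Integrable (fun ω => F (a ω, d ω)) (π i) ∧ ∫ ω, F (a ω, d ω) ∂(π i) < ε / 2 := by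
    intro d hd hlim
    filter_upwards [(ProbabilityMeasure.tendsto_iff_forall_integral_tendsto.mp hlim F).eventually
      (eventually_lt_nhds hF_lim)] with i hi
    rw [ProbabilityMeasure.toMeasure_map,
      integral_map (ha.prodMk hd).aemeasurable F.continuous.aestronglyMeasurable] at hi
    exact ⟨(F.integrable _).comp_measurable (ha.prodMk hd), hi⟩
  filter_upwards [hF_eventually hb hab, hF_eventually hc hac]
    with i ⟨hb_int, hb_lt⟩ ⟨hc_int, hc_lt⟩
  have h_nonneg : 0 ≤ ∫ ω, dist (b ω) (c ω) ∂(π i) := integral_nonneg fun _ => dist_nonneg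
  rw [Real.dist_0_eq_abs, abs_of_nonneg h_nonneg]
  calc ∫ ω, dist (b ω) (c ω) ∂(π i)
      ≤ ∫ ω, (F (a ω, b ω) + F (a ω, c ω)) ∂(π i) :=
        integral_mono_of_nonneg (.of_forall fun _ => dist_nonneg) (hb_int.add hc_int)
          (.of_forall fun ω => hF_dist (a ω) (b ω) (c ω))
    _ = ∫ ω, F (a ω, b ω) ∂(π i) + ∫ ω, F (a ω, c ω) ∂(π i) := integral_add hb_int hc_int
    _ < ε := by linarith

end GraphConcentration

section EmpiricalDistribution

variable {G V Z : Type*} [Fintype V] [Nonempty V] [MeasurableSpace Z]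

lemma toMeasure_map_empDist {W : Type*} [MeasurableSpace W] (σ : G → Equiv.Perm V) (z : V → Z)
    {F : (G → Z) → W} (hF : Measurable F) :
    ((empDist σ z).map hF.aemeasurable : Measure W) =
      (Fintype.card V : ℝ≥0∞)⁻¹ • ∑ v, Measure.dirac (F (pullbackName σ v z)) := by
  rw [ProbabilityMeasure.toMeasure_map, ← Measure.mapₗ_apply_of_measurable hF]
  change Measure.mapₗ F ((Fintype.card V : ℝ≥0∞)⁻¹ • ∑ v, Measure.dirac _) = _
  rw [map_smul, map_sum]
  simp only [Measure.mapₗ_apply_of_measurable hF, Measure.map_dirac' hF]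

lemma map_empDist_eq_of_forall_eq {Z' W : Type*} [MeasurableSpace Z'] [MeasurableSpace W]
    (σ : G → Equiv.Perm V) {z : V → Z} {z' : V → Z'} {F : (G → Z) → W} {F' : (G → Z') → W}
    (hF : Measurable F) (hF' : Measurable F')
    (h : ∀ v, F (pullbackName σ v z) = F' (pullbackName σ v z')) :
    (empDist σ z).map hF.aemeasurable = (empDist σ z').map hF'.aemeasurable :=
  ProbabilityMeasure.toMeasure_injective <| by
    rw [toMeasure_map_empDist σ z hF, toMeasure_map_empDist σ z' hF']
    simp only [h]

lemma integral_empDist (σ : G → Equiv.Perm V) (z : V → Z) {f : (G → Z) → ℝ}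
    (hf : StronglyMeasurable f) :
    ∫ u, f u ∂(empDist σ z : Measure (G → Z)) =
      (∑ v, f (pullbackName σ v z)) / Fintype.card V := by
  change ∫ u, f u ∂((Fintype.card V : ℝ≥0∞)⁻¹ • ∑ v, Measure.dirac _) = _
  rw [integral_smul_measure,
    integral_finsetSum_measure fun v _ => integrable_dirac' hf enorm_lt_top]
  simp [integral_dirac' f _ hf, div_eq_inv_mul]

end EmpiricalDistribution

section NameAndLabel

variable {G X Y : Type*} [Group G]

lemma shift_one (x : G → X) : shift 1 x = x :=
  funext fun h => by simp [shift]

/-- `(x, y) ↦ (x, y_e)`; it undoes `graphMap φ`. -/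
def nameAndLabel (u : G → X × Y) : (G → X) × Y := (fun g => (u g).1, (u 1).2)

lemma measurable_nameAndLabel [MeasurableSpace X] [MeasurableSpace Y] :
    Measurable (nameAndLabel (G := G) (X := X) (Y := Y)) := by
  unfold nameAndLabel; fun_prop

lemma continuous_nameAndLabel [TopologicalSpace X] [TopologicalSpace Y] :
    Continuous (nameAndLabel (G := G) (X := X) (Y := Y)) := by
  unfold nameAndLabel; fun_prop

lemma map_nameAndLabel_graphJoin [MeasurableSpace X] [MeasurableSpace Y] {φ : (G → X) → Y}
    (hφ : Measurable φ) (μ : ProbabilityMeasure (G → X)) :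
    (graphJoin hφ μ).map measurable_nameAndLabel.aemeasurable =
      μ.map (measurable_id.prodMk hφ).aemeasurable := by
  apply ProbabilityMeasure.toMeasure_injective
  simp only [graphJoin, ProbabilityMeasure.toMeasure_map,
    Measure.map_map measurable_nameAndLabel (measurable_graphMap hφ)]
  congr 1
  funext x
  simp [nameAndLabel, graphMap, shift_one]

end NameAndLabel

theorem dist_tendsto_zero_of_graphical_general {G : Type} [Group G] [Countable G]
    (V : ℕ → Type) [∀ n, Fintype (V n)] [∀ n, Nonempty (V n)]
    (σ : ∀ n, G → Equiv.Perm (V n))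
    {X Y : Type} [MetricSpace X] [CompactSpace X] [MeasurableSpace X] [BorelSpace X]
    [MetricSpace Y] [CompactSpace Y] [MeasurableSpace Y] [BorelSpace Y]
    (μ : ProbabilityMeasure (G → X))
    (φ : (G → X) → Y) (hφ : Measurable φ)
    (x : (n : ℕ) → V n → X) (y w : (n : ℕ) → V n → Y)
    (hy : Tendsto (fun n => empDist (σ n) (fun v => (x n v, y n v))) atTop (𝓝 (graphJoin hφ μ)))
    (hw : Tendsto (fun n => empDist (σ n) (fun v => (x n v, w n v))) atTop (𝓝 (graphJoin hφ μ))) :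
    Tendsto (fun n => hamming dist (y n) (w n)) atTop (𝓝 0) := by
  have ha : Measurable fun u : G → X × Y × Y => fun g => (u g).1 := by fun_prop
  have hb : Measurable fun u : G → X × Y × Y => (u 1).2.1 := by fun_prop
  have hc : Measurable fun u : G → X × Y × Y => (u 1).2.2 := by fun_prop
  have hy_graph :=
    ProbabilityMeasure.tendsto_map_of_tendsto_of_continuous _ _ hy continuous_nameAndLabel
  have hw_graph :=
    ProbabilityMeasure.tendsto_map_of_tendsto_of_continuous _ _ hw continuous_nameAndLabel
  rw [map_nameAndLabel_graphJoin] at hy_graph hw_graph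
  have h_integral := tendsto_integral_dist_zero_of_tendsto_map_graph μ hφ
    (fun n => empDist (σ n) (fun v => (x n v, y n v, w n v))) ha hb hc
    (hy_graph.congr fun n =>
      map_empDist_eq_of_forall_eq (σ n) measurable_nameAndLabel (ha.prodMk hb) fun _ => rfl)
    (hw_graph.congr fun n =>
      map_empDist_eq_of_forall_eq (σ n) measurable_nameAndLabel (ha.prodMk hc) fun _ => rfl)
  have h_dist : Continuous fun u : G → X × Y × Y => dist (u 1).2.1 (u 1).2.2 := by fun_prop
  refine h_integral.congr fun n => ?_
  rw [integral_empDist _ _ h_dist.stronglyMeasurable]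
  -- `σ n 1` is only a permutation of `V n`, not the identity.
  exact congrArg (· / _) (Equiv.sum_comp (σ n 1) fun v => dist (y n v) (w n v))

/-- If the joint empirical distributions of `(x_n, y_n)` and of `(x_n, w_n)` both converge weak*
to the graphical joining of a factor map, then `d_Y^{(V_n)}(y_n, w_n) → 0`. -/
theorem dist_tendsto_zero_of_graphical {G : Type} [Group G] [Countable G]
    (V : ℕ → Type) [∀ n, Fintype (V n)] [∀ n, Nonempty (V n)]
    (σ : ∀ n, G → Equiv.Perm (V n)) (hsofic : IsSoficApprox V σ)
    {X Y : Type} [MetricSpace X] [CompactSpace X] [MeasurableSpace X] [BorelSpace X]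
    [MetricSpace Y] [CompactSpace Y] [MeasurableSpace Y] [BorelSpace Y]
    (μ : ProbabilityMeasure (G → X)) (ν : ProbabilityMeasure (G → Y))
    (hμ : ShiftInvariant μ.toMeasure)
    (φ : (G → X) → Y) (hφ : Measurable φ)
    (hfac : μ.toMeasure.map (procMap φ) = ν.toMeasure)
    (x : (n : ℕ) → V n → X) (y w : (n : ℕ) → V n → Y)
    (hy : Tendsto (fun n => empDist (σ n) (fun v => (x n v, y n v))) atTop (𝓝 (graphJoin hφ μ)))
    (hw : Tendsto (fun n => empDist (σ n) (fun v => (x n v, w n v))) atTop (𝓝 (graphJoin hφ μ))) :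
    Tendsto (fun n => hamming dist (y n) (w n)) atTop (𝓝 0) :=
  dist_tendsto_zero_of_graphical_general V σ μ φ hφ x y w hy hw
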